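/- arXiv:2502.15667 — 2 statements merged into one kernel-verified Lean document; each statement's English description precedes it below -/
import Mathlib

section
/- For any positive definite matrices P, Q ∈ ℝ^{n×n} and any matrices R, X ∈ ℝ^{n×n}, the matrix (I − X R) P (I − X R)ᵀ + X Q Xᵀ is positive definite, and moreover it is bounded below (in the Loewner order) by (P⁻¹ + Rᵀ Q⁻¹ R)⁻¹. -/
/-!
With `M = Q + R P Rᵀ` and the gain `G = P Rᵀ M⁻¹`, completing the square in `X` gives
`(1 - X R) P (1 - X R)ᵀ + X Q Xᵀ = (P - P Rᵀ M⁻¹ R P) + (X - G) M (X - G)ᵀ`,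
and by the Woodbury identity the first summand is `(P⁻¹ + Rᵀ Q⁻¹ R)⁻¹`, which is positive
definite, while the second is positive semidefinite.
-/

open Matrix

variable {m n K : Type*} [Fintype m] [Fintype n] [DecidableEq m] [DecidableEq n]

section Identities

variable [CommRing K] [StarRing K]

theorem Matrix.inv_add_conjTranspose_mul_inv_mul_eq_sub {P : Matrix n n K} {Q : Matrix m m K}
    (R : Matrix m n K) (hP : IsUnit P) (hQ : IsUnit Q) (hM : IsUnit (Q + R * P * Rᴴ)) :
    (P⁻¹ + Rᴴ * Q⁻¹ * R)⁻¹ = P - P * Rᴴ * (Q + R * P * Rᴴ)⁻¹ * R * P := by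
  have hPP : P⁻¹⁻¹ = P := nonsing_inv_nonsing_inv P ((isUnit_iff_isUnit_det P).mp hP)
  have hQQ : Q⁻¹⁻¹ = Q := nonsing_inv_nonsing_inv Q ((isUnit_iff_isUnit_det Q).mp hQ)
  have woodbury := add_mul_mul_inv_eq_sub P⁻¹ Rᴴ Q⁻¹ R (isUnit_nonsing_inv_iff.mpr hP)
    (isUnit_nonsing_inv_iff.mpr hQ) (by rwa [hPP, hQQ])
  rwa [hPP, hQQ] at woodbury

theorem Matrix.one_sub_mul_mul_conjTranspose_add_eq {P : Matrix n n K} {Q : Matrix m m K}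
    (R : Matrix m n K) (X : Matrix n m K) (hP : P.IsHermitian) (hQ : Q.IsHermitian)
    (hM : IsUnit (Q + R * P * Rᴴ)) :
    (1 - X * R) * P * (1 - X * R)ᴴ + X * Q * Xᴴ =
      P - P * Rᴴ * (Q + R * P * Rᴴ)⁻¹ * R * P +
        (X - P * Rᴴ * (Q + R * P * Rᴴ)⁻¹) * (Q + R * P * Rᴴ) *
          (X - P * Rᴴ * (Q + R * P * Rᴴ)⁻¹)ᴴ := by
  set M := Q + R * P * Rᴴ with hM_def
  have hMH : Mᴴ = M := (hQ.add (isHermitian_mul_mul_conjTranspose R hP)).eq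
  have hMdet : IsUnit M.det := (isUnit_iff_isUnit_det M).mp hM
  simp only [conjTranspose_sub, conjTranspose_mul, conjTranspose_one, conjTranspose_nonsing_inv,
    conjTranspose_conjTranspose, hP.eq, hMH, Matrix.sub_mul, Matrix.mul_sub, Matrix.one_mul,
    Matrix.mul_one, Matrix.mul_assoc, nonsing_inv_mul_cancel_left _ _ hMdet,
    mul_nonsing_inv_cancel_left _ _ hMdet]
  simp only [hM_def, Matrix.add_mul, Matrix.mul_add, Matrix.mul_assoc]
  abel

end Identities

theorem Matrix.PosDef.one_sub_mul_mul_conjTranspose_add [Field K] [PartialOrder K] [StarRing K]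
    [StarOrderedRing K] {P : Matrix n n K} {Q : Matrix m m K} (hP : P.PosDef) (hQ : Q.PosDef)
    (R : Matrix m n K) (X : Matrix n m K) :
    ((1 - X * R) * P * (1 - X * R)ᴴ + X * Q * Xᴴ).PosDef ∧
      ((1 - X * R) * P * (1 - X * R)ᴴ + X * Q * Xᴴ
        - (P⁻¹ + Rᴴ * Q⁻¹ * R)⁻¹).PosSemidef := by
  have hM : (Q + R * P * Rᴴ).PosDef :=
    hQ.add_posSemidef (hP.posSemidef.mul_mul_conjTranspose_same R)
  have hS : (P⁻¹ + Rᴴ * Q⁻¹ * R).PosDef :=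
    hP.inv.add_posSemidef (hQ.inv.posSemidef.conjTranspose_mul_mul_same R)
  have hsq := hM.posSemidef.mul_mul_conjTranspose_same (X - P * Rᴴ * (Q + R * P * Rᴴ)⁻¹)
  rw [one_sub_mul_mul_conjTranspose_add_eq R X hP.isHermitian hQ.isHermitian hM.isUnit,
    ← inv_add_conjTranspose_mul_inv_mul_eq_sub R hP.isUnit hQ.isUnit hM.isUnit,
    add_sub_cancel_left]
  exact ⟨hS.inv.add_posSemidef hsq, hsq⟩

theorem stmt_3 {n : ℕ} (P Q R X : Matrix (Fin n) (Fin n) ℝ)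
    (hP : P.PosDef) (hQ : Q.PosDef) :
    ((1 - X * R) * P * (1 - X * R)ᵀ + X * Q * Xᵀ).PosDef ∧
    ((1 - X * R) * P * (1 - X * R)ᵀ + X * Q * Xᵀ
      - (P⁻¹ + Rᵀ * Q⁻¹ * R)⁻¹).PosSemidef := by
  simpa only [conjTranspose_eq_transpose_of_trivial] using
    hP.one_sub_mul_mul_conjTranspose_add hQ R X
end

section
/- For any positive semidefinite matrices Mₜ ∈ ℝ^{k×k} (t = 0,…,N−1), vectors wₜ ∈ ℝ^{m}, matrices Pₜ ∈ ℝ^{n×n} positive definite, if Σₜ wₜwₜᵀ is positive definite and each Pₜ is positive definite, then Σₜ (wₜwₜᵀ ⊗ Pₜ) is positive definite. -/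
/-!
Each summand `wₜwₜᵀ ⊗ Pₜ` is positive semidefinite, so it suffices to show that the quadratic
form of the sum vanishes only at `0`. Reshaping `x : m × n → ℝ` into a matrix `X : m × n`, the
quadratic form of the `t`-th summand is `vₜᵀ Pₜ vₜ` with `vₜ = wₜᵀ X`. If the total vanishes, every
`vₜ` vanishes, i.e. `W X = 0` where `W` has rows `wₜ`; since `WᵀW = Σₜ wₜwₜᵀ` is invertible, `X = 0`.
-/

open Matrix
open scoped Kronecker

theorem Matrix.dotProduct_kronecker_vecMulVec_mulVec {m n R : Type*} [Fintype m] [Fintype n]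
    [CommSemiring R] (w : m → R) (B : Matrix n n R) (x : m × n → R) :
    x ⬝ᵥ (vecMulVec w w ⊗ₖ B) *ᵥ x =
      (w ᵥ* of (Function.curry x)) ⬝ᵥ B *ᵥ (w ᵥ* of (Function.curry x)) := by
  simp only [dotProduct, mulVec, vecMul, kronecker_apply, vecMulVec_apply, of_apply,
    Function.curry_apply, Fintype.sum_prod_type, Finset.mul_sum, Finset.sum_mul]
  rw [Finset.sum_comm]
  refine Finset.sum_congr rfl fun j _ => ?_
  rw [Finset.sum_comm]
  symm
  rw [Finset.sum_comm]
  refine Finset.sum_congr rfl fun i' _ => ?_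
  rw [Finset.sum_comm]
  refine Finset.sum_congr rfl fun i _ => Finset.sum_congr rfl fun j' _ => ?_
  ring

theorem Matrix.sum_vecMulVec_self {ι m R : Type*} [Fintype ι] [CommSemiring R]
    (w : ι → m → R) : ∑ t, vecMulVec (w t) (w t) = (of w)ᵀ * of w := by
  ext i j
  simp [mul_apply, vecMulVec_apply, sum_apply]

theorem Matrix.eq_zero_of_forall_vecMul_eq_zero {ι m n : Type*} [Fintype ι] [Fintype m]
    [DecidableEq m] (w : ι → m → ℝ) (hw : (∑ t, vecMulVec (w t) (w t)).PosDef)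
    {X : Matrix m n ℝ} (hX : ∀ t, w t ᵥ* X = 0) : X = 0 := by
  have hWX : of w * X = 0 := by
    ext t j
    simpa [mul_apply, vecMul, dotProduct] using congrFun (hX t) j
  have hdet := (isUnit_iff_isUnit_det _).mp hw.isUnit
  rw [← nonsing_inv_mul_cancel_left _ X hdet, sum_vecMulVec_self, Matrix.mul_assoc, hWX,
    Matrix.mul_zero, Matrix.mul_zero]

theorem Matrix.posDef_sum_kronecker_vecMulVec {ι m n : Type*} [Fintype ι] [Fintype m]
    [Fintype n] (w : ι → m → ℝ) (P : ι → Matrix n n ℝ)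
    (hw : (∑ t, vecMulVec (w t) (w t)).PosDef) (hP : ∀ t, (P t).PosDef) :
    (∑ t, vecMulVec (w t) (w t) ⊗ₖ P t).PosDef := by
  classical
  have hterm (t : ι) : (vecMulVec (w t) (w t) ⊗ₖ P t).PosSemidef := by
    simpa using (posSemidef_vecMulVec_self_star (w t)).kronecker (hP t).posSemidef
  have hsum := posSemidef_sum Finset.univ fun t _ => hterm t
  refine PosDef.of_dotProduct_mulVec_pos hsum.isHermitian fun x hx => ?_
  refine (hsum.dotProduct_mulVec_nonneg x).lt_of_ne' fun hzero => hx ?_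
  simp only [star_trivial, sum_mulVec, dotProduct_sum] at hzero
  have hterm_zero (t : ι) : x ⬝ᵥ (vecMulVec (w t) (w t) ⊗ₖ P t) *ᵥ x = 0 :=
    (Finset.sum_eq_zero_iff_of_nonneg fun t _ => by
      simpa using (hterm t).dotProduct_mulVec_nonneg x).mp hzero t (Finset.mem_univ t)
  have hX : of (Function.curry x) = 0 := by
    refine eq_zero_of_forall_vecMul_eq_zero w hw fun t => ?_
    by_contra hne
    have hpos := (hP t).dotProduct_mulVec_pos hne
    rw [star_trivial, ← dotProduct_kronecker_vecMulVec_mulVec, hterm_zero t] at hpos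
    exact hpos.false
  funext ⟨i, j⟩
  exact congrFun (congrFun hX i) j

theorem stmt_11_general {N m n : ℕ}
    (w : Fin N → Fin m → ℝ)
    (P : Fin N → Matrix (Fin n) (Fin n) ℝ)
    (hw : (∑ t : Fin N, Matrix.vecMulVec (w t) (w t)).PosDef)
    (hP : ∀ t, (P t).PosDef) :
    (∑ t : Fin N,
      Matrix.kroneckerMap (· * ·) (Matrix.vecMulVec (w t) (w t)) (P t)).PosDef :=
  posDef_sum_kronecker_vecMulVec w P hw hP

theorem stmt_11 {N m n k : ℕ}
    (M : Fin N → Matrix (Fin k) (Fin k) ℝ)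
    (hM : ∀ t, (M t).PosSemidef)
    (w : Fin N → Fin m → ℝ)
    (P : Fin N → Matrix (Fin n) (Fin n) ℝ)
    (hw : (∑ t : Fin N, Matrix.vecMulVec (w t) (w t)).PosDef)
    (hP : ∀ t, (P t).PosDef) :
    (∑ t : Fin N,
      Matrix.kroneckerMap (· * ·) (Matrix.vecMulVec (w t) (w t)) (P t)).PosDef :=
  stmt_11_general w P hw hP
end
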